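/- Let $g = \sum_{m=1}^M \pi_m g_m$ and $\hat g = \sum_{m=1}^M \hat\pi_m g_m$, with each $|g_m|\le C$ on a set $S$, and suppose $g$ is polyhedral with parameter $\rho>0$ at its minimizer $x^*\in S$, i.e. $g(x^*)\le g(x)-\rho\|x-x^*\|$ for all $x\in S$. If $\hat x\in S$ minimizes $\hat g$ over $S$ and $\max_m|\hat\pi_m-\pi_m|\le \delta$, then $\|\hat x - x^*\| \le 2\delta M C/\rho$. -/
import Mathlib


/-- Distance of the empirical minimizer from the true minimizer under the
polyhedral property. -/
theorem stmt_3 (d M : ℕ) (g : Fin M → EuclideanSpace ℝ (Fin d) → ℝ)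
    (π πhat : Fin M → ℝ) (C ρ δ : ℝ) (S : Set (EuclideanSpace ℝ (Fin d)))
    (hρ : 0 < ρ)
    (hπ : ∀ m, 0 ≤ π m) (hπ1 : ∑ m, π m = 1)
    (hπhat : ∀ m, 0 ≤ πhat m) (hπhat1 : ∑ m, πhat m = 1)
    (hbdd : ∀ m, ∀ x ∈ S, |g m x| ≤ C)
    (xstar xhat : EuclideanSpace ℝ (Fin d))
    (hxstarS : xstar ∈ S) (hxhatS : xhat ∈ S)
    (hpoly : ∀ x ∈ S, ∑ m, π m * g m xstar ≤ (∑ m, π m * g m x) - ρ * ‖x - xstar‖)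
    (hxhat : ∀ x ∈ S, ∑ m, πhat m * g m xhat ≤ ∑ m, πhat m * g m x)
    (hδ : ∀ m, |πhat m - π m| ≤ δ) :
    ‖xhat - xstar‖ ≤ 2 * δ * M * C / ρ := by
  have hM : 0 < M := by
    by_contra h
    interval_cases M
    simp at hπ1
  have hdiff : ∀ x ∈ S, |(∑ m, π m * g m x) - ∑ m, πhat m * g m x| ≤ δ * M * C := by
    intro x hx
    have : (∑ m, π m * g m x) - ∑ m, πhat m * g m x = ∑ m, (π m - πhat m) * g m x := by
      rw [← Finset.sum_sub_distrib]; exact Finset.sum_congr rfl fun m _ => by ring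
    rw [this]
    calc |∑ m, (π m - πhat m) * g m x| ≤ ∑ m : Fin M, |(π m - πhat m) * g m x| :=
          Finset.abs_sum_le_sum_abs _ _
      _ ≤ ∑ m : Fin M, δ * C := by
          apply Finset.sum_le_sum
          intro m _
          rw [abs_mul]
          have h1 : |π m - πhat m| ≤ δ := by rw [abs_sub_comm]; exact hδ m
          exact mul_le_mul h1 (hbdd m x hx) (abs_nonneg _)
            ((abs_nonneg (πhat m - π m)).trans (hδ m))
      _ = δ * M * C := by simp [Finset.sum_const]; ring
  have key : ρ * ‖xhat - xstar‖ ≤ 2 * (δ * M * C) := by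
    have h1 := hpoly xhat hxhatS
    have h2 := hxhat xstar hxstarS
    have h3 := hdiff xhat hxhatS
    have h4 := hdiff xstar hxstarS
    have h3' := abs_le.mp h3
    have h4' := abs_le.mp h4
    linarith [h3'.1, h3'.2, h4'.1, h4'.2]
  rw [div_eq_mul_inv, ← mul_comm ρ⁻¹, ← div_eq_inv_mul, le_div_iff₀ hρ]
  linarith
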